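/- Solutions trapped on one side of the virial surface are unbounded: let q(t) be a solution of Newton's N-body equations defined for all t ∈ ℝ with total energy E = −h < 0, and suppose that either (i) there is a constant c with U(q(t)) ≤ c < 2h for all t, or (ii) there is a constant C with U(q(t)) ≥ C > 2h for all t. Then the solution is unbounded: sup_{t ∈ ℝ} I(t) = ∞. -/

import Mathlib

open Finset Filter MeasureTheory
open scoped RealInnerProductSpace

noncomputable section

/-- Configuration space of `N` bodies in `ℝ³`. -/
abbrev Config (N : ℕ) := Fin N → EuclideanSpace ℝ (Fin 3)

/-- A configuration is collision-free if all bodies occupy distinct positions. -/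
def CollisionFree {N : ℕ} (q : Config N) : Prop :=
  ∀ a b : Fin N, a ≠ b → q a ≠ q b

/-- The Newtonian potential `U(q) = G ∑_{a<b} m_a m_b / |q_a - q_b|`. -/
def potU {N : ℕ} (G : ℝ) (m : Fin N → ℝ) (q : Config N) : ℝ :=
  G * ∑ a : Fin N, ∑ b : Fin N, if a < b then m a * m b / ‖q a - q b‖ else 0

/-- Kinetic energy `K = (1/2) ∑_a m_a |v_a|²`. -/
def kinE {N : ℕ} (m : Fin N → ℝ) (v : Config N) : ℝ :=
  (1 / 2) * ∑ a : Fin N, m a * ‖v a‖ ^ 2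

/-- Moment of inertia `I = ∑_a m_a |q_a|²`. -/
def momI {N : ℕ} (m : Fin N → ℝ) (q : Config N) : ℝ :=
  ∑ a : Fin N, m a * ‖q a‖ ^ 2

/-- `q, v : ℝ → Config N` is a solution of Newton's N-body equations on `J`:
at each time in `J` the configuration is collision-free, `v` is the derivative
of `q`, and the acceleration satisfies
`m_a q̈_a = G ∑_{b ≠ a} m_a m_b (q_b - q_a)/|q_b - q_a|³`. -/
def IsSolutionOn {N : ℕ} (G : ℝ) (m : Fin N → ℝ) (J : Set ℝ)
    (q v : ℝ → Config N) : Prop :=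
  ∀ t ∈ J,
    CollisionFree (q t) ∧
    (∀ a, HasDerivAt (fun s => q s a) (v t a) t) ∧
    (∀ a, ∃ acc : EuclideanSpace ℝ (Fin 3),
      HasDerivAt (fun s => v s a) acc t ∧
      m a • acc = ∑ b ∈ univ.filter (fun b => b ≠ a),
        (G * m a * m b / ‖q t b - q t a‖ ^ 3) • (q t b - q t a))

/-! By the virial identity `∑ ⟪q_a, F_a⟫ = -U` and energy conservation `K = U - h`, the
Lagrange–Jacobi identity reads `Ï = 4K - 2U = 2U - 4h`. Trapped below `2h`, `I` is then uniformly
concave and would become negative; trapped above `2h`, it is uniformly convex and grows at least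
quadratically. -/

theorem tendsto_atTop_of_hasDerivAt_of_eventually_le {f f' : ℝ → ℝ} {ε : ℝ} (hε : 0 < ε)
    (hf : ∀ t, HasDerivAt f (f' t) t) (hf' : ∀ᶠ t in atTop, ε ≤ f' t) :
    Tendsto f atTop atTop := by
  obtain ⟨T, hT⟩ := eventually_atTop.1 hf'
  have hgrowth : ∀ t ≥ T, ε * (t - T) ≤ f t - f T := fun t ht =>
    (convex_Ici T).mul_sub_le_image_sub_of_le_deriv
      (fun x _ => (hf x).continuousAt.continuousWithinAt)
      (fun x _ => (hf x).differentiableAt.differentiableWithinAt)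
      (fun x hx => (hf x).deriv ▸ hT x (interior_Ici.subset hx).le)
      T Set.self_mem_Ici t ht ht
  refine tendsto_atTop_mono' _ (eventually_atTop.2 ⟨T, fun t ht => ?_⟩)
    (tendsto_atTop_add_const_left _ (f T)
      ((tendsto_atTop_add_const_right _ (-T) tendsto_id).const_mul_atTop hε))
  change f T + ε * (t + -T) ≤ f t
  linarith [hgrowth t ht]

theorem tendsto_atTop_of_hasDerivAt_of_second_deriv_ge {f f' f'' : ℝ → ℝ} {ε : ℝ} (hε : 0 < ε)
    (hf : ∀ t, HasDerivAt f (f' t) t) (hf' : ∀ t, HasDerivAt f' (f'' t) t)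
    (hf'' : ∀ t, ε ≤ f'' t) : Tendsto f atTop atTop :=
  tendsto_atTop_of_hasDerivAt_of_eventually_le one_pos hf
    ((tendsto_atTop_of_hasDerivAt_of_eventually_le hε hf' (.of_forall hf'')).eventually_ge_atTop 1)

theorem Finset.sum_sum_ne_eq_sum_sum_lt {ι M : Type*} [Fintype ι] [LinearOrder ι]
    [AddCommMonoid M] (f : ι → ι → M) :
    ∑ a, ∑ b ∈ univ.filter (· ≠ a), f a b = ∑ a, ∑ b, if a < b then f a b + f b a else 0 := by
  have hsplit : ∀ a b, (if b ≠ a then f a b else 0)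
      = (if a < b then f a b else 0) + (if b < a then f a b else 0) := by
    intro a b
    rcases lt_trichotomy a b with hab | rfl | hab
    · simp [hab, hab.ne', hab.not_gt]
    · simp
    · simp [hab, hab.ne, hab.not_gt]
  simp only [sum_filter, hsplit, sum_add_distrib]
  rw [sum_comm (f := fun a b => if b < a then f a b else 0), ← sum_add_distrib]
  refine sum_congr rfl fun a _ => ?_
  rw [← sum_add_distrib]
  exact sum_congr rfl fun b _ => by split_ifs <;> simp

section NBody

variable {N : ℕ}

def newtonForce (G : ℝ) (m : Fin N → ℝ) (q : Config N) : Config N := fun a =>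
  ∑ b ∈ univ.filter (· ≠ a), (G * m a * m b / ‖q b - q a‖ ^ 3) • (q b - q a)

theorem sum_inner_newtonForce {G : ℝ} {m : Fin N → ℝ} {q : Config N} (hq : CollisionFree q) :
    ∑ a, ⟪q a, newtonForce G m q a⟫ = -potU G m q := by
  have hpair : ∀ a b : Fin N, a < b →
      G * m a * m b / ‖q b - q a‖ ^ 3 * ⟪q a, q b - q a⟫
        + G * m b * m a / ‖q a - q b‖ ^ 3 * ⟪q b, q a - q b⟫
      = -(G * (m a * m b / ‖q a - q b‖)) := by
    intro a b hab
    have hr : 0 < ‖q a - q b‖ := norm_pos_iff.2 (sub_ne_zero_of_ne (hq a b hab.ne))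
    have hinner : ⟪q a, q b - q a⟫ + ⟪q b, q a - q b⟫ = -‖q a - q b‖ ^ 2 := by
      rw [← real_inner_self_eq_norm_sq]
      simp only [inner_sub_left, inner_sub_right, real_inner_comm (q a) (q b)]
      ring
    rw [norm_sub_rev (q b), show G * m b * m a = G * m a * m b by ring, ← mul_add, hinner]
    field_simp
  calc ∑ a, ⟪q a, newtonForce G m q a⟫
      = ∑ a, ∑ b ∈ univ.filter (· ≠ a), G * m a * m b / ‖q b - q a‖ ^ 3 * ⟪q a, q b - q a⟫ := by
        simp only [newtonForce, inner_sum, real_inner_smul_right]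
    _ = ∑ a, ∑ b, -(G * if a < b then m a * m b / ‖q a - q b‖ else 0) := by
        rw [sum_sum_ne_eq_sum_sum_lt]
        refine sum_congr rfl fun a _ => sum_congr rfl fun b _ => ?_
        split_ifs with hab
        · exact hpair a b hab
        · simp
    _ = -potU G m q := by simp only [potU, mul_sum, sum_neg_distrib]

theorem momI_nonneg {m : Fin N → ℝ} (hm : ∀ a, 0 ≤ m a) (q : Config N) : 0 ≤ momI m q :=
  sum_nonneg fun a _ => mul_nonneg (hm a) (sq_nonneg _)

theorem hasDerivAt_momI {m : Fin N → ℝ} {q v : ℝ → Config N} {t : ℝ}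
    (hq : ∀ a, HasDerivAt (fun s => q s a) (v t a) t) :
    HasDerivAt (fun s => momI m (q s)) (2 * ∑ a, m a * ⟪q t a, v t a⟫) t := by
  simp only [momI, mul_sum]
  refine HasDerivAt.fun_sum fun a _ => ?_
  have := ((hq a).inner ℝ (hq a)).const_mul (m a)
  simp only [real_inner_self_eq_norm_sq] at this
  refine this.congr_deriv ?_
  rw [real_inner_comm (q t a)]
  ring

theorem hasDerivAt_sum_mul_inner {m : Fin N → ℝ} {q v : ℝ → Config N} {acc : Config N} {t : ℝ}
    (hq : ∀ a, HasDerivAt (fun s => q s a) (v t a) t)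
    (hv : ∀ a, HasDerivAt (fun s => v s a) (acc a) t) :
    HasDerivAt (fun s => ∑ a, m a * ⟪q s a, v s a⟫)
      (∑ a, ⟪q t a, m a • acc a⟫ + 2 * kinE m (v t)) t := by
  have hsum : ∑ a, ⟪q t a, m a • acc a⟫ + 2 * kinE m (v t)
      = ∑ a, m a * (⟪q t a, acc a⟫ + ⟪v t a, v t a⟫) := by
    rw [kinE, ← mul_assoc, mul_one_div_cancel two_ne_zero, one_mul, ← sum_add_distrib]
    refine sum_congr rfl fun a _ => ?_
    rw [real_inner_smul_right, real_inner_self_eq_norm_sq]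
    ring
  rw [hsum]
  exact HasDerivAt.fun_sum fun a _ => ((hq a).inner ℝ (hv a)).const_mul (m a)

theorem IsSolutionOn.hasDerivAt_sum_mul_inner {G : ℝ} {m : Fin N → ℝ} {J : Set ℝ}
    {q v : ℝ → Config N} (hsol : IsSolutionOn G m J q v) {t : ℝ} (ht : t ∈ J) :
    HasDerivAt (fun s => ∑ a, m a * ⟪q s a, v s a⟫) (2 * kinE m (v t) - potU G m (q t)) t := by
  obtain ⟨hcf, hq, hv⟩ := hsol t ht
  choose acc hacc hforce using hv
  have hforce' : ∀ a, m a • acc a = newtonForce G m (q t) a := hforce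
  have := _root_.hasDerivAt_sum_mul_inner (m := m) hq hacc
  rw [sum_congr rfl fun a _ => congrArg _ (hforce' a), sum_inner_newtonForce hcf] at this
  convert this using 1
  ring

end NBody

theorem trapped_one_side_unbounded_general
    (N : ℕ) (G : ℝ)
    (m : Fin N → ℝ) (hm : ∀ a, 0 < m a)
    (q v : ℝ → Config N)
    (hsol : IsSolutionOn G m Set.univ q v)
    (h : ℝ)
    (hE : ∀ t : ℝ, kinE m (v t) - potU G m (q t) = -h)
    (htrapped :
      (∃ c : ℝ, c < 2 * h ∧ ∀ t : ℝ, potU G m (q t) ≤ c) ∨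
      (∃ C : ℝ, 2 * h < C ∧ ∀ t : ℝ, C ≤ potU G m (q t))) :
    ¬ ∃ M : ℝ, ∀ t : ℝ, momI m (q t) ≤ M := by
  rintro ⟨M, hM⟩
  have hI t := hasDerivAt_momI (m := m) (hsol t (Set.mem_univ t)).2.1
  have hI' t := (hsol.hasDerivAt_sum_mul_inner (Set.mem_univ t)).const_mul 2
  rcases htrapped with ⟨c, hc, hU⟩ | ⟨C, hC, hU⟩
  · have hneg : Tendsto (fun t => -momI m (q t)) atTop atTop :=
      tendsto_atTop_of_hasDerivAt_of_second_deriv_ge (ε := 4 * h - 2 * c) (by linarith)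
        (fun t => (hI t).neg) (fun t => (hI' t).neg) fun t => by linarith [hE t, hU t]
    obtain ⟨t, ht⟩ := (hneg.eventually_gt_atTop 0).exists
    exact ht.not_ge (neg_nonpos.2 (momI_nonneg (fun a => (hm a).le) _))
  · have hpos : Tendsto (fun t => momI m (q t)) atTop atTop :=
      tendsto_atTop_of_hasDerivAt_of_second_deriv_ge (ε := 2 * C - 4 * h) (by linarith)
        hI hI' fun t => by linarith [hE t, hU t]
    obtain ⟨t, ht⟩ := (hpos.eventually_gt_atTop M).exists
    exact ht.not_ge (hM t)

/-- solutions trapped on one side of the virial surface are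
unbounded: if a solution defined for all time with energy `-h < 0` satisfies
either `U ≤ c < 2h` for all `t` or `U ≥ C > 2h` for all `t`, then
`sup_t I(t) = ∞`, i.e. `I` is not bounded above. -/
theorem trapped_one_side_unbounded
    (N : ℕ) (hN : 2 ≤ N) (G : ℝ) (hG : 0 < G)
    (m : Fin N → ℝ) (hm : ∀ a, 0 < m a)
    (q v : ℝ → Config N)
    (hsol : IsSolutionOn G m Set.univ q v)
    (h : ℝ) (hh : 0 < h)
    (hE : ∀ t : ℝ, kinE m (v t) - potU G m (q t) = -h)
    (htrapped :
      (∃ c : ℝ, c < 2 * h ∧ ∀ t : ℝ, potU G m (q t) ≤ c) ∨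
      (∃ C : ℝ, 2 * h < C ∧ ∀ t : ℝ, C ≤ potU G m (q t))) :
    ¬ ∃ M : ℝ, ∀ t : ℝ, momI m (q t) ≤ M :=
  trapped_one_side_unbounded_general N G m hm q v hsol h hE htrapped
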